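/- Let p, q ≥ 1, let G be a split graph with clique C = {c_1,…,c_p} and independent set U = {u_1,…,u_q}, let G′ be the split reduction graph of G, and let φ be the bijection from C ∪ U to D ∪ W given by φ(c_i) = d_i and φ(u_j) = w_j. Then for every integer k ≥ 1 and all k-independent sets I and J of G, the sets I and J lie in the same connected component of the token-sliding reconfiguration graph TS_k(G) if and only if φ(I) and φ(J) lie in the same connected component of TS_k(G′). -/

import Mathlib

/-- An independent set of a graph, as a finset of pairwise non-adjacent vertices. -/
def IsIndepF {V : Type*} (H : SimpleGraph V) (I : Finset V) : Prop :=
  ∀ u ∈ I, ∀ v ∈ I, ¬ H.Adj u v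

/-- The token-sliding reconfiguration graph `TS_m(H)`. -/
def TSGraph {V : Type*} [DecidableEq V] (H : SimpleGraph V) (m : ℕ) :
    SimpleGraph {I : Finset V // I.card = m ∧ IsIndepF H I} where
  Adj I J := ∃ u v, J.1 \ I.1 = {u} ∧ I.1 \ J.1 = {v} ∧ H.Adj u v
  symm := ⟨by rintro I J ⟨u, v, h1, h2, h3⟩; exact ⟨v, u, h2, h1, h3.symm⟩⟩
  loopless := ⟨by
    rintro I ⟨u, v, h1, h2, h3⟩
    rw [Finset.sdiff_self] at h1
    exact (Finset.singleton_ne_empty u) h1.symm⟩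

/-- `I` and `J` lie in the same connected component of `TS_m(H)`; in particular both
are `m`-independent sets of `H`. -/
def TSSameComponent {V : Type*} [DecidableEq V] (H : SimpleGraph V) (m : ℕ)
    (I J : Finset V) : Prop :=
  ∃ (hI : I.card = m ∧ IsIndepF H I) (hJ : J.card = m ∧ IsIndepF H J),
    (TSGraph H m).Reachable ⟨I, hI⟩ ⟨J, hJ⟩

/-- Vertices of the split reduction graph. -/
inductive SVert (p q : ℕ) : Type where
  | d : Fin p → SVert p q
  | w : Fin q → SVert p q
  | s : Fin q → SVert p q
deriving DecidableEq

/-- The split reduction graph `G'` of a split graph `G` on `Fin p ⊕ Fin q`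
(`Sum.inl` is the clique `C`, `Sum.inr` the independent set `U`). -/
def splitRed (p q : ℕ) (G : SimpleGraph (Fin p ⊕ Fin q)) : SimpleGraph (SVert p q) :=
  SimpleGraph.fromRel (fun a b =>
    match a, b with
    | .d i, .d j => i ≠ j
    | .d i, .w j => G.Adj (Sum.inl i) (Sum.inr j)
    | .s _, .d _ => True
    | _, _ => False)

/-- The bijection `φ` from `C ∪ U` to `D ∪ W`, given by `φ(c_i) = d_i`, `φ(u_j) = w_j`. -/
def phi {p q : ℕ} : Fin p ⊕ Fin q → SVert p q
  | Sum.inl i => SVert.d i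
  | Sum.inr j => SVert.w j

/-! `φ` identifies `G` with the subgraph of `G'` induced on `D ∪ W`, so every slide of `TS_k(G)`
is one of `TS_k(G')`. Conversely, follow a sliding sequence in `TS_k(G')` starting at `φ(I)`.
A token can enter a special vertex only from a clique vertex `d_c` and can only leave it for a
clique vertex `d_j`, which in `G` is the slide `c → j` along the clique. While a token is parked
on `s_i` no other token moves: there is no token on `D`, and the tokens on `W` only have
neighbours in `D`, all adjacent to `s_i`. So every configuration of the sequence is `φ(A)`, up to
one parked clique token, for some `A` reachable from `I` in `TS_k(G)`; since `φ(J)` avoids the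
special vertices, the last one is `φ(J)` itself. -/

theorem Finset.sdiff_eq_singleton_and_sdiff_eq_singleton_iff {α : Type*} [DecidableEq α]
    {s t : Finset α} {u v : α} :
    (t \ s = {u} ∧ s \ t = {v}) ↔ u ∉ s ∧ v ∈ s ∧ t = insert u (s.erase v) := by
  constructor
  · rintro ⟨hts, hst⟩
    have hu : u ∈ t \ s := hts ▸ Finset.mem_singleton_self u
    have hv : v ∈ s \ t := hst ▸ Finset.mem_singleton_self v
    rw [Finset.mem_sdiff] at hu hv
    refine ⟨hu.2, hv.1, Finset.ext fun x => ?_⟩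
    have hx₁ := congrArg (x ∈ ·) hts
    have hx₂ := congrArg (x ∈ ·) hst
    simp only [Finset.mem_sdiff, Finset.mem_singleton, eq_iff_iff] at hx₁ hx₂
    simp only [Finset.mem_insert, Finset.mem_erase]
    grind
  · rintro ⟨hu, hv, rfl⟩
    constructor <;> ext x <;> simp only [Finset.mem_sdiff, Finset.mem_insert, Finset.mem_erase,
      Finset.mem_singleton] <;> grind

section TokenSliding

variable {V W : Type*} [DecidableEq W] {H : SimpleGraph V} {H' : SimpleGraph W}

abbrev TSConfig (H : SimpleGraph V) (m : ℕ) : Type _ :=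
  {I : Finset V // I.card = m ∧ IsIndepF H I}

theorem TSGraph.adj_iff_exists_slide [DecidableEq V] {m : ℕ} {I J : TSConfig H m} :
    (TSGraph H m).Adj I J ↔
      ∃ u ∉ I.1, ∃ v ∈ I.1, J.1 = insert u (I.1.erase v) ∧ H.Adj u v := by
  refine ⟨fun ⟨u, v, hu, hv, huv⟩ => ?_, fun ⟨u, hu, v, hv, hJ, huv⟩ => ?_⟩
  · obtain ⟨hu, hv, hJ⟩ := Finset.sdiff_eq_singleton_and_sdiff_eq_singleton_iff.1 ⟨hu, hv⟩
    exact ⟨u, hu, v, hv, hJ, huv⟩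
  · obtain ⟨hu, hv⟩ := Finset.sdiff_eq_singleton_and_sdiff_eq_singleton_iff.2 ⟨hu, hv, hJ⟩
    exact ⟨u, v, hu, hv, huv⟩

theorem isIndepF_image_iff (f : H ↪g H') (A : Finset V) :
    IsIndepF H' (A.image f) ↔ IsIndepF H A := by
  simp only [IsIndepF, Finset.forall_mem_image, f.map_adj_iff]

theorem card_image_eq_and_isIndepF_image_iff (f : H ↪g H') (A : Finset V) (m : ℕ) :
    ((A.image f).card = m ∧ IsIndepF H' (A.image f)) ↔ (A.card = m ∧ IsIndepF H A) := by
  rw [Finset.card_image_of_injective _ f.injective, isIndepF_image_iff]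

def TSGraph.map [DecidableEq V] (f : H ↪g H') (m : ℕ) : TSGraph H m →g TSGraph H' m where
  toFun I := ⟨I.1.image f, (card_image_eq_and_isIndepF_image_iff f I.1 m).2 I.2⟩
  map_rel' := by
    rintro I J ⟨u, v, hu, hv, huv⟩
    refine ⟨f u, f v, ?_, ?_, f.map_adj_iff.2 huv⟩ <;>
      simp only [← Finset.image_sdiff _ _ f.injective, hu, hv, Finset.image_singleton]

end TokenSliding

section SplitReduction

variable {p q : ℕ} {G : SimpleGraph (Fin p ⊕ Fin q)}

theorem phi_injective : Function.Injective (phi : Fin p ⊕ Fin q → SVert p q) := by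
  rintro (i | i) (j | j) h <;> simp_all [phi]

theorem phi_ne_s (x : Fin p ⊕ Fin q) (i : Fin q) : phi x ≠ .s i := by
  cases x <;> simp [phi]

theorem s_notMem_image_phi (A : Finset (Fin p ⊕ Fin q)) (i : Fin q) :
    SVert.s i ∉ A.image phi := by
  simp [phi_ne_s]

theorem exists_phi_eq_or_eq_s (u : SVert p q) : (∃ x, phi x = u) ∨ ∃ i, u = .s i := by
  cases u with
  | d j => exact .inl ⟨.inl j, rfl⟩
  | w j => exact .inl ⟨.inr j, rfl⟩
  | s i => exact .inr ⟨i, rfl⟩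

theorem splitRed_adj_s_iff {u : SVert p q} {i : Fin q} :
    (splitRed p q G).Adj u (.s i) ↔ ∃ j, u = .d j := by
  cases u <;> simp [splitRed]

theorem exists_eq_d_of_splitRed_adj_w {u : SVert p q} {t : Fin q}
    (h : (splitRed p q G).Adj u (.w t)) : ∃ j, u = .d j := by
  cases u <;> simp_all [splitRed]

theorem splitRed_adj_phi_iff (hC : ∀ i j : Fin p, i ≠ j → G.Adj (Sum.inl i) (Sum.inl j))
    (hU : ∀ i j : Fin q, ¬ G.Adj (Sum.inr i) (Sum.inr j)) {x y : Fin p ⊕ Fin q} :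
    (splitRed p q G).Adj (phi x) (phi y) ↔ G.Adj x y := by
  rcases x with i | i <;> rcases y with j | j
  · simp only [splitRed, phi, SimpleGraph.fromRel_adj, ne_eq, SVert.d.injEq]
    refine ⟨fun h => hC i j h.1, fun h => ?_⟩
    have hij : i ≠ j := by rintro rfl; exact G.loopless.irrefl _ h
    exact ⟨hij, .inl hij⟩
  · simp [splitRed, phi]
  · simp [splitRed, phi, G.adj_comm]
  · simp [splitRed, phi, hU]

def phiEmbedding (hC : ∀ i j : Fin p, i ≠ j → G.Adj (Sum.inl i) (Sum.inl j))
    (hU : ∀ i j : Fin q, ¬ G.Adj (Sum.inr i) (Sum.inr j)) : G ↪g splitRed p q G where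
  toFun := phi
  inj' := phi_injective
  map_rel_iff' := splitRed_adj_phi_iff hC hU

theorem card_image_phi_eq_and_isIndepF_iff
    (hC : ∀ i j : Fin p, i ≠ j → G.Adj (Sum.inl i) (Sum.inl j))
    (hU : ∀ i j : Fin q, ¬ G.Adj (Sum.inr i) (Sum.inr j))
    (A : Finset (Fin p ⊕ Fin q)) (k : ℕ) :
    ((A.image phi).card = k ∧ IsIndepF (splitRed p q G) (A.image phi)) ↔
      (A.card = k ∧ IsIndepF G A) :=
  card_image_eq_and_isIndepF_image_iff (phiEmbedding hC hU) A k

/-- `B` is `φ(A)`, except that the token of one clique vertex `c ∈ A` may be parked on a special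
vertex `s_i`. -/
def ParkedImage (A : Finset (Fin p ⊕ Fin q)) (B : Finset (SVert p q)) : Prop :=
  B = A.image phi ∨ ∃ i c, Sum.inl c ∈ A ∧ B = insert (.s i) ((A.erase (.inl c)).image phi)

theorem ParkedImage.eq_of_image {A A' : Finset (Fin p ⊕ Fin q)}
    (h : ParkedImage A (A'.image phi)) : A = A' := by
  rcases h with h | ⟨i, c, -, h⟩
  · exact (Finset.image_injective phi_injective h).symm
  · exact absurd (h ▸ Finset.mem_insert_self _ _) (s_notMem_image_phi A' i)

variable {k : ℕ}

theorem ParkedImage.exists_reachable_of_adj_of_eq_image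
    (hC : ∀ i j : Fin p, i ≠ j → G.Adj (Sum.inl i) (Sum.inl j))
    (hU : ∀ i j : Fin q, ¬ G.Adj (Sum.inr i) (Sum.inr j))
    {A : TSConfig G k} {B B' : TSConfig (splitRed p q G) k}
    (hB : B.1 = A.1.image phi) (hBB' : (TSGraph (splitRed p q G) k).Adj B B') :
    ∃ A' : TSConfig G k, (TSGraph G k).Reachable A A' ∧ ParkedImage A'.1 B'.1 := by
  obtain ⟨u, hu, v, hv, hB', huv⟩ := TSGraph.adj_iff_exists_slide.1 hBB'
  rw [hB] at hu hv hB'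
  obtain ⟨x, hx, rfl⟩ := Finset.mem_image.1 hv
  rcases exists_phi_eq_or_eq_s u with ⟨y, rfl⟩ | ⟨i, rfl⟩
  · have hy : y ∉ A.1 := fun h => hu (Finset.mem_image_of_mem phi h)
    have hB'A' : B'.1 = (insert y (A.1.erase x)).image phi := by
      rw [hB', Finset.image_insert, Finset.image_erase phi_injective]
    let A' : TSConfig G k :=
      ⟨_, (card_image_phi_eq_and_isIndepF_iff hC hU _ k).1 (hB'A' ▸ B'.2)⟩
    have hAA' : (TSGraph G k).Adj A A' :=
      TSGraph.adj_iff_exists_slide.2 ⟨y, hy, x, hx, rfl, (splitRed_adj_phi_iff hC hU).1 huv⟩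
    exact ⟨A', hAA'.reachable, .inl hB'A'⟩
  · obtain ⟨c, hc⟩ := splitRed_adj_s_iff.1 huv.symm
    obtain rfl : x = .inl c := phi_injective hc
    exact ⟨A, .refl _, .inr ⟨i, c, hx, by rw [hB', Finset.image_erase phi_injective]⟩⟩

theorem ParkedImage.exists_reachable_of_adj_of_eq_parked
    (hC : ∀ i j : Fin p, i ≠ j → G.Adj (Sum.inl i) (Sum.inl j))
    (hU : ∀ i j : Fin q, ¬ G.Adj (Sum.inr i) (Sum.inr j))
    {A : TSConfig G k} {B B' : TSConfig (splitRed p q G) k} {i : Fin q} {c : Fin p}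
    (hc : Sum.inl c ∈ A.1) (hB : B.1 = insert (.s i) ((A.1.erase (.inl c)).image phi))
    (hBB' : (TSGraph (splitRed p q G) k).Adj B B') :
    ∃ A' : TSConfig G k, (TSGraph G k).Reachable A A' ∧ ParkedImage A'.1 B'.1 := by
  obtain ⟨u, hu, v, hv, hB', huv⟩ := TSGraph.adj_iff_exists_slide.1 hBB'
  rw [hB, Finset.mem_insert] at hv
  rcases hv with rfl | hv
  · obtain ⟨j, rfl⟩ := splitRed_adj_s_iff.1 huv
    have hB'A' : B'.1 = (insert (.inl j) (A.1.erase (.inl c))).image phi := by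
      rw [hB', hB, Finset.erase_insert (s_notMem_image_phi _ i), Finset.image_insert]
      rfl
    by_cases hjc : j = c
    · subst hjc
      exact ⟨A, .refl _, .inl (by rw [hB'A', Finset.insert_erase hc])⟩
    have hj : Sum.inl j ∉ A.1 := fun h => hu <| hB ▸ Finset.mem_insert_of_mem
      (Finset.mem_image_of_mem phi (Finset.mem_erase.2 ⟨by simpa using hjc, h⟩))
    let A' : TSConfig G k :=
      ⟨_, (card_image_phi_eq_and_isIndepF_iff hC hU _ k).1 (hB'A' ▸ B'.2)⟩
    have hAA' : (TSGraph G k).Adj A A' :=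
      TSGraph.adj_iff_exists_slide.2 ⟨.inl j, hj, .inl c, hc, rfl, hC j c hjc⟩
    exact ⟨A', hAA'.reachable, .inl hB'A'⟩
  · -- A token on some `φ(x)` cannot move: `s_i ∈ B` forces `x ∈ U`, and every neighbour of
    -- `φ(x)` lies in `D`, hence is adjacent to `s_i`, which stays in `B'`.
    exfalso
    have hsB : SVert.s i ∈ B.1 := hB ▸ Finset.mem_insert_self _ _
    obtain ⟨x, -, rfl⟩ := Finset.mem_image.1 hv
    obtain ⟨t, rfl⟩ : ∃ t, x = .inr t := by
      rcases x with x | t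
      · exact absurd (splitRed_adj_s_iff.2 ⟨x, rfl⟩)
          (B.2.2 _ (hB ▸ Finset.mem_insert_of_mem hv) _ hsB)
      · exact ⟨t, rfl⟩
    obtain ⟨j, rfl⟩ := exists_eq_d_of_splitRed_adj_w huv
    have hsB' : SVert.s i ∈ B'.1 := by
      rw [hB']
      exact Finset.mem_insert_of_mem (Finset.mem_erase.2 ⟨by simp [phi], hsB⟩)
    exact B'.2.2 _ (hB' ▸ Finset.mem_insert_self _ _) _ hsB' (splitRed_adj_s_iff.2 ⟨j, rfl⟩)

theorem ParkedImage.exists_reachable_of_reachable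
    (hC : ∀ i j : Fin p, i ≠ j → G.Adj (Sum.inl i) (Sum.inl j))
    (hU : ∀ i j : Fin q, ¬ G.Adj (Sum.inr i) (Sum.inr j))
    {A : TSConfig G k} {B B' : TSConfig (splitRed p q G) k} (hAB : ParkedImage A.1 B.1)
    (hBB' : (TSGraph (splitRed p q G) k).Reachable B B') :
    ∃ A' : TSConfig G k, (TSGraph G k).Reachable A A' ∧ ParkedImage A'.1 B'.1 := by
  rw [SimpleGraph.reachable_iff_reflTransGen] at hBB'
  induction hBB' with
  | refl => exact ⟨A, .refl _, hAB⟩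
  | tail _ hadj ih =>
    obtain ⟨A₁, hA₁, h₁⟩ := ih
    obtain ⟨A₂, hA₂, h₂⟩ :
        ∃ A₂ : TSConfig G k, (TSGraph G k).Reachable A₁ A₂ ∧ ParkedImage A₂.1 _ :=
      h₁.elim (exists_reachable_of_adj_of_eq_image hC hU · hadj)
        fun ⟨_, _, hc, hB⟩ => exists_reachable_of_adj_of_eq_parked hC hU hc hB hadj
    exact ⟨A₂, hA₁.trans hA₂, h₂⟩

end SplitReduction

theorem splitReduction_reachability_correct_general
    (p q : ℕ) (G : SimpleGraph (Fin p ⊕ Fin q))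
    (hC : ∀ i j : Fin p, i ≠ j → G.Adj (Sum.inl i) (Sum.inl j))
    (hU : ∀ i j : Fin q, ¬ G.Adj (Sum.inr i) (Sum.inr j))
    (k : ℕ) (I J : Finset (Fin p ⊕ Fin q)) :
    TSSameComponent G k I J ↔
      TSSameComponent (splitRed p q G) k (I.image phi) (J.image phi) := by
  constructor
  · rintro ⟨hI, hJ, hIJ⟩
    exact ⟨(card_image_phi_eq_and_isIndepF_iff hC hU I k).2 hI,
      (card_image_phi_eq_and_isIndepF_iff hC hU J k).2 hJ,
      hIJ.map (TSGraph.map (phiEmbedding hC hU) k)⟩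
  · rintro ⟨hI, _, hIJ⟩
    obtain ⟨⟨A, hA⟩, hIA, hAJ⟩ := ParkedImage.exists_reachable_of_reachable hC hU
      (A := ⟨I, (card_image_phi_eq_and_isIndepF_iff hC hU I k).1 hI⟩) (.inl rfl) hIJ
    obtain rfl : A = J := hAJ.eq_of_image
    exact ⟨_, hA, hIA⟩

theorem splitReduction_reachability_correct
    (p q : ℕ) (hp : 1 ≤ p) (hq : 1 ≤ q) (G : SimpleGraph (Fin p ⊕ Fin q))
    (hC : ∀ i j : Fin p, i ≠ j → G.Adj (Sum.inl i) (Sum.inl j))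
    (hU : ∀ i j : Fin q, ¬ G.Adj (Sum.inr i) (Sum.inr j))
    (k : ℕ) (hk : 1 ≤ k) (I J : Finset (Fin p ⊕ Fin q))
    (hI : I.card = k ∧ IsIndepF G I) (hJ : J.card = k ∧ IsIndepF G J) :
    TSSameComponent G k I J ↔
      TSSameComponent (splitRed p q G) k (I.image phi) (J.image phi) :=
  splitReduction_reachability_correct_general p q G hC hU k I J
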